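/- arXiv:1010.4894 — 2 statements merged into one kernel-verified Lean document; each statement's English description precedes it below -/
import Mathlib

section
/- Let p ∈ (1,∞). Then there is a constant c_p ≥ 0 such that the following holds: whenever X is a Banach space, (T(s))_{s≥0} is a C₀-semigroup on X satisfying ‖T(s)‖ ≤ M(1+s)^α for all s ≥ 0 (with constants M ≥ 0, α ≥ 0), 0 < a < b < ∞, μ is a finite complex Borel measure on [0,∞) supported in [a,b], and C ≥ 0 is an L^p(ℝ;X)-convolution bound for μ, then ‖∫_{[a,b]} T(s)x μ(ds)‖ ≤ c_p M² (1+b)^{2α} (1 + log(b/a)) C ‖x‖ for all x ∈ X. -/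
/-!
Let `φ_v = v⁻¹ 𝟙_[0,v] ∗ 𝟙_[0,v]` be the tent of height one on `[0, 2v]`. With
`F(r) = 𝟙_[0,v](-r) T(-r) x`, Fubini and the semigroup law give
`∫ φ_v(s) T(s) x μ(ds) = v⁻¹ ∫₀^v T(t) (μ ∗ F)(t) dt`, and Hölder on `[0, v]` together with
the convolution bound yields `‖∫ φ_v(s) T(s) x μ(ds)‖ ≤ K² C ‖x‖` for every `v ≤ b`, where
`K = sup_{[0,b]} ‖T‖`. On `[b/2ⁿ, b]` the tents `φ_b` and `½ φ_{b/2ʲ}`, `1 ≤ j ≤ n`, form a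
partition of unity, and `n ≤ 2 log(b/a) + 1` dyadic scales reach down to `a`.
-/

open MeasureTheory Set
open scoped ENNReal

lemma ENNReal.ofReal_inv_mul_rpow_mul_rpow_sub {v : ℝ} (hv : 0 < v) (q : ℝ) :
    ENNReal.ofReal v⁻¹ * ENNReal.ofReal v ^ q * ENNReal.ofReal v ^ (1 - q) = 1 := by
  rw [mul_assoc, ← ENNReal.rpow_add _ _ (by simpa using hv) ENNReal.ofReal_ne_top,
    add_sub_cancel, ENNReal.rpow_one, ← ENNReal.ofReal_mul (by positivity),
    inv_mul_cancel₀ hv.ne', ENNReal.ofReal_one]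

lemma norm_indicator_le_of_norm_le {α E : Type*} [NormedAddCommGroup E] {S : Set α}
    {f : α → E} {B : ℝ} (hB : ∀ x ∈ S, ‖f x‖ ≤ B) (hB₀ : 0 ≤ B) (x : α) :
    ‖S.indicator f x‖ ≤ B :=
  (norm_indicator_eq_indicator_norm f x).le.trans (indicator_apply_le' (hB x) fun _ => hB₀)

lemma eLpNorm_indicator_le_enorm_mul_rpow {α E : Type*} [MeasurableSpace α]
    [NormedAddCommGroup E] {μ : Measure α} {S : Set α} {f : α → E} {B : ℝ}
    (hB : ∀ x ∈ S, ‖f x‖ ≤ B) (p : ℝ≥0∞) :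
    eLpNorm (S.indicator f) p μ ≤ ‖B‖ₑ * μ S ^ (1 / p.toReal) := by
  refine (eLpNorm_mono fun x => ?_).trans (eLpNorm_indicator_const_le B p)
  by_cases hx : x ∈ S
  · simpa [hx] using (hB x hx).trans (le_abs_self B)
  · simp [hx]

lemma setLIntegral_enorm_le_eLpNorm_mul_rpow {α E : Type*} [MeasurableSpace α]
    [NormedAddCommGroup E] {μ : Measure α} {p : ℝ≥0∞} (hp : 1 ≤ p) {f : α → E}
    (hf : AEStronglyMeasurable f μ) (S : Set α) :
    ∫⁻ x in S, ‖f x‖ₑ ∂μ ≤ eLpNorm f p μ * μ S ^ (1 - 1 / p.toReal) := by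
  have := eLpNorm_le_eLpNorm_mul_rpow_measure_univ (μ := μ.restrict S) hp hf.restrict
  rw [eLpNorm_one_eq_lintegral_enorm, Measure.restrict_apply_univ, ENNReal.toReal_one,
    div_one] at this
  exact this.trans (by gcongr; exact Measure.restrict_le_self)

lemma enorm_setIntegral_apply_le {𝕜 α E F : Type*} [NontriviallyNormedField 𝕜]
    [NormedAddCommGroup E] [NormedSpace 𝕜 E] [NormedAddCommGroup F] [NormedSpace 𝕜 F]
    [NormedSpace ℝ F] [MeasurableSpace α] {μ : Measure α} {S : Set α} (hS : MeasurableSet S)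
    {p : ℝ≥0∞} (hp : 1 ≤ p) {T : α → E →L[𝕜] F} {K : ℝ} (hT : ∀ t ∈ S, ‖T t‖ ≤ K) {G : α → E}
    (hG : AEStronglyMeasurable G μ) :
    ‖∫ t in S, T t (G t) ∂μ‖ₑ ≤ ENNReal.ofReal K * (eLpNorm G p μ * μ S ^ (1 - 1 / p.toReal)) :=
  calc ‖∫ t in S, T t (G t) ∂μ‖ₑ
      ≤ ∫⁻ t in S, ENNReal.ofReal K * ‖G t‖ₑ ∂μ := by
        refine (enorm_integral_le_lintegral_enorm _).trans
          (setLIntegral_mono' hS fun t ht => (T t).le_of_opENorm_le ?_ _)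
        rw [← ofReal_norm]
        exact ENNReal.ofReal_le_ofReal (hT t ht)
    _ = ENNReal.ofReal K * ∫⁻ t in S, ‖G t‖ₑ ∂μ := lintegral_const_mul' _ _ ENNReal.ofReal_ne_top
    _ ≤ _ := by gcongr; exact setLIntegral_enorm_le_eLpNorm_mul_rpow hp hG S

lemma eLpNorm_indicator_Icc_comp_neg_le {E : Type*} [NormedAddCommGroup E] {u : ℝ → E}
    (hu : StronglyMeasurable u) {v B : ℝ} (hB : 0 ≤ B) (huB : ∀ r ∈ Icc 0 v, ‖u r‖ ≤ B)
    (p : ℝ≥0∞) :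
    eLpNorm (fun r => (Icc 0 v).indicator u (-r)) p volume
      ≤ ENNReal.ofReal B * ENNReal.ofReal v ^ (1 / p.toReal) := by
  have := eLpNorm_indicator_le_enorm_mul_rpow (μ := volume) huB p
  rwa [Real.volume_Icc, sub_zero, Real.enorm_of_nonneg hB, ← eLpNorm_comp_measurePreserving
    (hu.indicator measurableSet_Icc).aestronglyMeasurable (Measure.measurePreserving_neg _)] at this

noncomputable def ramp (v s : ℝ) : ℝ := min 1 (max 0 s / v)

/-- `tent v = v⁻¹ 𝟙_[0,v] ∗ 𝟙_[0,v]` (`integral_indicator_mul_indicator_sub`); writing it as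
a difference of ramps makes sums over dyadic scales telescope. -/
noncomputable def tent (v s : ℝ) : ℝ := 2 * (ramp v s - ramp (2 * v) s)

lemma continuous_tent (v : ℝ) : Continuous (tent v) := by
  unfold tent ramp
  fun_prop

lemma ramp_mem_Icc {v : ℝ} (hv : 0 ≤ v) (s : ℝ) : ramp v s ∈ Icc 0 1 :=
  ⟨le_min zero_le_one (div_nonneg (le_max_left _ _) hv), min_le_left _ _⟩

lemma norm_tent_le {v : ℝ} (hv : 0 ≤ v) (s : ℝ) : ‖tent v s‖ ≤ 2 := by
  have h₁ := ramp_mem_Icc hv s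
  have h₂ := ramp_mem_Icc (by positivity : 0 ≤ 2 * v) s
  rw [tent, Real.norm_eq_abs, abs_le]
  constructor <;> linarith [h₁.1, h₁.2, h₂.1, h₂.2]

lemma ramp_eq_one {v s : ℝ} (hv : 0 < v) (hs : v ≤ s) : ramp v s = 1 := by
  rw [ramp, max_eq_right (hv.le.trans hs), min_eq_left ((one_le_div hv).2 hs)]

lemma ramp_eq_div {v s : ℝ} (hv : 0 < v) (hs₀ : 0 ≤ s) (hs : s ≤ v) : ramp v s = s / v := by
  rw [ramp, max_eq_right hs₀, min_eq_right ((div_le_one hv).2 hs)]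

lemma ramp_of_nonpos {v s : ℝ} (hs : s ≤ 0) : ramp v s = 0 := by
  rw [ramp, max_eq_left hs, zero_div, min_eq_right zero_le_one]

lemma tent_eq_overlap {v : ℝ} (hv : 0 < v) (s : ℝ) :
    v * tent v s = max 0 (min v s - max 0 (s - v)) := by
  rcases le_total s 0 with hs | hs
  · rw [tent, ramp_of_nonpos hs, ramp_of_nonpos hs, min_eq_right (hs.trans hv.le),
      max_eq_left (show s - v ≤ 0 by linarith), max_eq_left (show s - 0 ≤ 0 by linarith)]
    ring
  rcases le_total s v with hsv | hvs
  · rw [tent, ramp_eq_div hv hs hsv, ramp_eq_div (by positivity) hs (by linarith),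
      min_eq_right hsv, max_eq_left (show s - v ≤ 0 by linarith),
      max_eq_right (show 0 ≤ s - 0 by linarith)]
    field_simp
    ring
  rcases le_total s (2 * v) with hs2 | hs2
  · rw [tent, ramp_eq_one hv hvs, ramp_eq_div (by positivity) hs hs2, min_eq_left hvs,
      max_eq_right (show 0 ≤ s - v by linarith), max_eq_right (show 0 ≤ v - (s - v) by linarith)]
    field_simp
    ring
  · rw [tent, ramp_eq_one hv hvs, ramp_eq_one (by positivity) hs2, min_eq_left hvs,
      max_eq_right (show 0 ≤ s - v by linarith), max_eq_left (show v - (s - v) ≤ 0 by linarith)]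
    ring

lemma indicator_mul_indicator_sub (v s : ℝ) :
    (fun t => (Icc 0 v).indicator (1 : ℝ → ℝ) t * (Icc 0 v).indicator 1 (s - t))
      = (Icc (max 0 (s - v)) (min v s)).indicator 1 := by
  ext t
  simp only [indicator_apply, mem_Icc, Pi.one_apply, max_le_iff, le_min_iff]
  split_ifs <;> simp_all <;> linarith

lemma integral_indicator_mul_indicator_sub {v : ℝ} (hv : 0 < v) (s : ℝ) :
    ∫ t, (Icc 0 v).indicator (1 : ℝ → ℝ) t * (Icc 0 v).indicator 1 (s - t) = v * tent v s := by
  rw [indicator_mul_indicator_sub, integral_indicator_one measurableSet_Icc, measureReal_def,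
    Real.volume_Icc, ENNReal.toReal_ofReal', tent_eq_overlap hv, max_comm]

lemma tent_add_sum_tent_eq_one {b s : ℝ} (hb : 0 < b) (n : ℕ) (hs : b / 2 ^ n ≤ s)
    (hsb : s ≤ b) :
    tent b s + 2⁻¹ * ∑ j ∈ Finset.range n, tent (b / 2 ^ (j + 1)) s = 1 := by
  have hs₀ : 0 ≤ s := (by positivity : 0 ≤ b / 2 ^ n).trans hs
  have htel : ∀ j : ℕ,
      tent (b / 2 ^ (j + 1)) s = 2 * (ramp (b / 2 ^ (j + 1)) s - ramp (b / 2 ^ j) s) := fun j => by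
    rw [tent, pow_succ, ← div_div, mul_div_cancel₀ _ two_ne_zero]
  simp only [htel, ← Finset.mul_sum, Finset.sum_range_sub (fun j => ramp (b / 2 ^ j) s)]
  rw [tent, ramp_eq_one (by positivity) hs, pow_zero, div_one, ramp_eq_div hb hs₀ hsb,
    ramp_eq_div (by positivity) hs₀ (by linarith)]
  field_simp
  ring

lemma MeasureTheory.Integrable.tent_smul {E : Type*} [NormedAddCommGroup E] [NormedSpace ℝ E]
    {ν : Measure ℝ} {g : ℝ → E} (hg : Integrable g ν) {v : ℝ} (hv : 0 ≤ v) :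
    Integrable (fun s => tent v s • g s) ν :=
  hg.bdd_smul 2 (continuous_tent v).aestronglyMeasurable
    (Filter.Eventually.of_forall (norm_tent_le hv))

lemma norm_integral_le_of_norm_integral_tent_smul_le {E : Type*} [NormedAddCommGroup E]
    [NormedSpace ℝ E] {ν : Measure ℝ} {g : ℝ → E} (hg : Integrable g ν) {b D : ℝ} (hb : 0 < b)
    (n : ℕ) (hν : ∀ᵐ s ∂ν, s ∈ Icc (b / 2 ^ n) b)
    (hD : ∀ v, 0 < v → v ≤ b → ‖∫ s, tent v s • g s ∂ν‖ ≤ D) :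
    ‖∫ s, g s ∂ν‖ ≤ (1 + n / 2) * D := by
  have hv : ∀ j : ℕ, 0 < b / 2 ^ (j + 1) := fun j => by positivity
  have hsplit : ∫ s, g s ∂ν = ∫ s, tent b s • g s ∂ν
      + (2⁻¹ : ℝ) • ∑ j ∈ Finset.range n, ∫ s, tent (b / 2 ^ (j + 1)) s • g s ∂ν := by
    rw [← integral_finsetSum _ fun j _ => hg.tent_smul (hv j).le, ← integral_smul,
      ← integral_add (hg.tent_smul hb.le) ((integrable_finsetSum _ fun j _ =>
        hg.tent_smul (hv j).le).fun_smul _)]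
    refine integral_congr_ae ?_
    filter_upwards [hν] with s hs
    rw [← Finset.sum_smul, smul_smul, ← add_smul, tent_add_sum_tent_eq_one hb n hs.1 hs.2,
      one_smul]
  have hsum : ‖∑ j ∈ Finset.range n, ∫ s, tent (b / 2 ^ (j + 1)) s • g s ∂ν‖ ≤ n * D := by
    refine (norm_sum_le _ _).trans ?_
    simpa using Finset.sum_le_sum fun j (_ : j ∈ Finset.range n) =>
      hD _ (hv j) (div_le_self hb.le (one_le_pow₀ one_le_two))
  rw [hsplit]
  refine (norm_add_le _ _).trans ?_
  rw [norm_smul, Real.norm_of_nonneg (by norm_num)]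
  linarith [hD b hb le_rfl]

lemma exists_div_two_pow_le {a b : ℝ} (ha : 0 < a) (hab : a ≤ b) :
    ∃ n : ℕ, b / 2 ^ n ≤ a ∧ (n : ℝ) ≤ 2 * Real.log (b / a) + 1 := by
  have hlog : 0 ≤ Real.log (b / a) := Real.log_nonneg ((one_le_div ha).2 hab)
  refine ⟨⌈2 * Real.log (b / a)⌉₊, ?_, (Nat.ceil_lt_add_one (by positivity)).le⟩
  have hn : Real.log (b / a) ≤ Real.log (2 ^ ⌈2 * Real.log (b / a)⌉₊) := by
    rw [Real.log_pow]
    nlinarith [Nat.le_ceil (2 * Real.log (b / a)), Real.log_two_gt_d9]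
  rw [div_le_iff₀ (by positivity), ← div_le_iff₀' ha]
  exact (Real.log_le_log_iff (div_pos (ha.trans_le hab) ha) (by positivity)).1 hn

section Transference

variable {X : Type*} [NormedAddCommGroup X] [NormedSpace ℂ X]
  {T : ℝ → X →L[ℂ] X} {u : ℝ → X} {v : ℝ}

lemma indicator_mul_indicator_sub_smul_eq
    (horbit : ∀ t ∈ Icc 0 v, ∀ r ∈ Icc 0 v, T t (u r) = u (t + r)) (c : ℂ) (s t : ℝ) :
    ((Icc 0 v).indicator (1 : ℝ → ℝ) t * (Icc 0 v).indicator 1 (s - t)) • c • u s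
      = (Icc 0 v).indicator (fun t => T t (c • (Icc 0 v).indicator u (s - t))) t := by
  by_cases ht : t ∈ Icc 0 v
  · by_cases hst : s - t ∈ Icc 0 v
    · simp [ht, hst, horbit t ht _ hst]
    · simp [ht, hst]
  · simp [ht]

lemma norm_indicator_apply_orbit_le {K B : ℝ} (hT : ∀ t ∈ Icc 0 v, ‖T t‖ ≤ K)
    (huB : ∀ r ∈ Icc 0 v, ‖u r‖ ≤ B) (c : ℂ) (s t : ℝ) :
    ‖(Icc 0 v).indicator (fun t => T t (c • (Icc 0 v).indicator u (s - t))) t‖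
      ≤ ‖c‖ * (Icc 0 v).indicator (fun _ => K * B) t := by
  by_cases ht : t ∈ Icc 0 v
  · have hB := norm_indicator_le_of_norm_le huB ((norm_nonneg _).trans (huB t ht)) (s - t)
    simp only [indicator_of_mem ht]
    calc ‖T t (c • (Icc 0 v).indicator u (s - t))‖
        ≤ K * (‖c‖ * B) := by
          refine (T t).le_of_opNorm_le (hT t ht) _ |>.trans ?_
          rw [norm_smul]
          gcongr
          exact (norm_nonneg _).trans (hT t ht)
      _ = ‖c‖ * (K * B) := by ring
  · simp [ht]

variable [CompleteSpace X]

lemma integral_tent_smul_eq {ν : Measure ℝ} [SFinite ν] {h : ℝ → ℂ} (hh : Integrable h ν)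
    (hu : StronglyMeasurable u) {K B : ℝ} (hv : 0 < v)
    (hT : ∀ t ∈ Icc 0 v, ‖T t‖ ≤ K) (huB : ∀ r ∈ Icc 0 v, ‖u r‖ ≤ B)
    (horbit : ∀ t ∈ Icc 0 v, ∀ r ∈ Icc 0 v, T t (u r) = u (t + r)) :
    ∫ s, tent v s • h s • u s ∂ν
      = v⁻¹ • ∫ t in Icc 0 v, T t (∫ s, h s • (Icc 0 v).indicator u (s - t) ∂ν) := by
  have hind : Measurable ((Icc 0 v).indicator (1 : ℝ → ℝ)) :=
    measurable_one.indicator measurableSet_Icc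
  set f : ℝ → ℝ → X := fun s t =>
    ((Icc 0 v).indicator (1 : ℝ → ℝ) t * (Icc 0 v).indicator 1 (s - t)) • h s • u s
  have hf_int : Integrable (Function.uncurry f) (ν.prod volume) := by
    have hbound : Integrable (fun z : ℝ × ℝ => ‖h z.1‖ * (Icc 0 v).indicator (fun _ => K * B) z.2)
        (ν.prod volume) :=
      hh.norm.mul_prod (continuous_const.integrableOn_Icc.integrable_indicator measurableSet_Icc)
    refine hbound.mono' ?_ (Filter.Eventually.of_forall fun z => ?_)
    · exact ((hind.comp measurable_snd).mul (hind.comp (measurable_fst.sub measurable_snd))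
        ).aestronglyMeasurable.smul (hh.aestronglyMeasurable.comp_fst.smul
          (hu.comp_measurable measurable_fst).aestronglyMeasurable)
    · simpa only [f, Function.uncurry, indicator_mul_indicator_sub_smul_eq horbit]
        using norm_indicator_apply_orbit_le hT huB (h z.1) z.1 z.2
  have hinner : ∀ t, ∫ s, f s t ∂ν
      = (Icc 0 v).indicator (fun t => T t (∫ s, h s • (Icc 0 v).indicator u (s - t) ∂ν)) t := by
    intro t
    simp only [f, indicator_mul_indicator_sub_smul_eq horbit]
    by_cases ht : t ∈ Icc 0 v
    · simp only [indicator_of_mem ht]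
      refine ContinuousLinearMap.integral_comp_comm _ (hh.smul_bdd B ?_ (Filter.Eventually.of_forall
        (norm_indicator_le_of_norm_le huB ((norm_nonneg _).trans (huB t ht)) <| · - t)))
      exact ((hu.indicator measurableSet_Icc).comp_measurable
        (measurable_id.sub_const t)).aestronglyMeasurable
    · simp [ht]
  calc ∫ s, tent v s • h s • u s ∂ν = ∫ s, v⁻¹ • ∫ t, f s t ∂volume ∂ν := by
        refine integral_congr_ae (Filter.Eventually.of_forall fun s => ?_)
        simp only [f]
        rw [integral_smul_const, integral_indicator_mul_indicator_sub hv, smul_smul, ← mul_assoc,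
          inv_mul_cancel₀ hv.ne', one_mul]
    _ = _ := by
        rw [integral_smul, integral_integral_swap hf_int,
          integral_congr_ae (Filter.Eventually.of_forall hinner),
          integral_indicator measurableSet_Icc]

theorem norm_integral_tent_smul_orbit_le {p : ℝ≥0∞} (hp : 1 ≤ p) {ν : Measure ℝ} [SFinite ν]
    {h : ℝ → ℂ} (hh : Integrable h ν) (hu : StronglyMeasurable u) {K B C : ℝ} (hv : 0 < v)
    (hC : 0 ≤ C) (hT : ∀ t ∈ Icc 0 v, ‖T t‖ ≤ K) (huB : ∀ r ∈ Icc 0 v, ‖u r‖ ≤ B)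
    (horbit : ∀ t ∈ Icc 0 v, ∀ r ∈ Icc 0 v, T t (u r) = u (t + r))
    (hconv : ∀ F : ℝ → X, MemLp F p volume →
      eLpNorm (fun t => ∫ s, h s • F (t - s) ∂ν) p volume ≤ ENNReal.ofReal C * eLpNorm F p volume) :
    ‖∫ s, tent v s • h s • u s ∂ν‖ ≤ K * C * B := by
  have h0 : (0 : ℝ) ∈ Icc 0 v := ⟨le_rfl, hv.le⟩
  have hK : 0 ≤ K := (norm_nonneg _).trans (hT 0 h0)
  have hB : 0 ≤ B := (norm_nonneg _).trans (huB 0 h0)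
  set F : ℝ → X := fun r => (Icc 0 v).indicator u (-r)
  have hF_meas : StronglyMeasurable F :=
    (hu.indicator measurableSet_Icc).comp_measurable measurable_neg
  have hF : eLpNorm F p volume ≤ ENNReal.ofReal B * ENNReal.ofReal v ^ (1 / p.toReal) :=
    eLpNorm_indicator_Icc_comp_neg_le hu hB huB p
  have hF_mem : MemLp F p volume :=
    ⟨hF_meas.aestronglyMeasurable, hF.trans_lt (by finiteness)⟩
  set G : ℝ → X := fun t => ∫ s, h s • F (t - s) ∂ν
  have hG_meas : AEStronglyMeasurable G volume :=
    AEStronglyMeasurable.integral_prod_right' (f := fun z : ℝ × ℝ => h z.2 • F (z.1 - z.2))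
      (hh.aestronglyMeasurable.comp_snd.smul
        (hF_meas.comp_measurable (measurable_fst.sub measurable_snd)).aestronglyMeasurable)
  have hG_eq : ∀ t, G t = ∫ s, h s • (Icc 0 v).indicator u (s - t) ∂ν := fun t => by
    simp only [G, F, neg_sub]
  have key : ‖∫ s, tent v s • h s • u s ∂ν‖ₑ ≤ ENNReal.ofReal (K * C * B) := by
    simp_rw [integral_tent_smul_eq hh hu hv hT huB horbit, enorm_smul, ← hG_eq,
      Real.enorm_of_nonneg (inv_nonneg.2 hv.le)]
    calc ENNReal.ofReal v⁻¹ * ‖∫ t in Icc 0 v, T t (G t)‖ₑ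
        ≤ ENNReal.ofReal v⁻¹ * (ENNReal.ofReal K *
            (eLpNorm G p volume * ENNReal.ofReal v ^ (1 - 1 / p.toReal))) := by
          gcongr
          simpa using enorm_setIntegral_apply_le measurableSet_Icc hp hT hG_meas
      _ ≤ ENNReal.ofReal v⁻¹ * (ENNReal.ofReal K * (ENNReal.ofReal C *
            (ENNReal.ofReal B * ENNReal.ofReal v ^ (1 / p.toReal))
              * ENNReal.ofReal v ^ (1 - 1 / p.toReal))) := by
          gcongr
          exact (hconv F hF_mem).trans (by gcongr)
      _ = ENNReal.ofReal K * ENNReal.ofReal C * ENNReal.ofReal B * (ENNReal.ofReal v⁻¹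
            * ENNReal.ofReal v ^ (1 / p.toReal) * ENNReal.ofReal v ^ (1 - 1 / p.toReal)) := by
          ring
      _ = ENNReal.ofReal (K * C * B) := by
          rw [ENNReal.ofReal_inv_mul_rpow_mul_rpow_sub hv, mul_one,
            ENNReal.ofReal_mul (by positivity), ENNReal.ofReal_mul hK]
  rwa [← ofReal_norm, ENNReal.ofReal_le_ofReal_iff (by positivity)] at key

theorem norm_integral_smul_orbit_le {p : ℝ≥0∞} (hp : 1 ≤ p)
    (hsemigroup : ∀ s ≥ (0:ℝ), ∀ t ≥ (0:ℝ), T (s + t) = (T s).comp (T t)) {x : X}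
    (hcont : ContinuousOn (fun s => T s x) (Ici 0)) {b K C : ℝ} (hb : 0 < b) (hC : 0 ≤ C)
    (hT : ∀ t ∈ Icc 0 b, ‖T t‖ ≤ K) {ν : Measure ℝ} [SFinite ν] (n : ℕ)
    (hν : ∀ᵐ s ∂ν, s ∈ Icc (b / 2 ^ n) b) {h : ℝ → ℂ} (hh : Integrable h ν)
    (hconv : ∀ F : ℝ → X, MemLp F p volume →
      eLpNorm (fun t => ∫ s, h s • F (t - s) ∂ν) p volume ≤ ENNReal.ofReal C * eLpNorm F p volume) :
    ‖∫ s, h s • T s x ∂ν‖ ≤ (1 + n / 2) * (K ^ 2 * C * ‖x‖) := by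
  set u : ℝ → X := fun s => T (max s 0) x
  have hu : Continuous u :=
    hcont.comp_continuous (continuous_id.max continuous_const) fun s => le_max_right s 0
  have hu_eq : ∀ s, 0 ≤ s → u s = T s x := fun s hs => by simp only [u, max_eq_left hs]
  have huB : ∀ r ∈ Icc 0 b, ‖u r‖ ≤ K * ‖x‖ := fun r hr => by
    rw [hu_eq r hr.1]
    exact (T r).le_of_opNorm_le (hT r hr) x
  have horbit : ∀ t ≥ (0:ℝ), ∀ r ≥ (0:ℝ), T t (u r) = u (t + r) := fun t ht r hr => by
    rw [hu_eq r hr, hu_eq _ (add_nonneg ht hr), hsemigroup t ht r hr,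
      ContinuousLinearMap.comp_apply]
  have hν₀ : ∀ᵐ s ∂ν, s ∈ Icc 0 b :=
    hν.mono fun s hs => ⟨(by positivity : 0 ≤ b / 2 ^ n).trans hs.1, hs.2⟩
  have hint : Integrable (fun s => h s • u s) ν :=
    hh.smul_bdd (K * ‖x‖) hu.aestronglyMeasurable (hν₀.mono huB)
  rw [integral_congr_ae (hν₀.mono fun s hs => show h s • T s x = h s • u s by rw [hu_eq s hs.1])]
  refine (norm_integral_le_of_norm_integral_tent_smul_le (D := K * C * (K * ‖x‖)) hint hb n hν
    fun v hv hvb => ?_).trans_eq (by ring)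
  exact norm_integral_tent_smul_orbit_le hp hh hu.stronglyMeasurable hv hC
    (fun t ht => hT t ⟨ht.1, ht.2.trans hvb⟩) (fun r hr => huB r ⟨hr.1, hr.2.trans hvb⟩)
    (fun t ht r hr => horbit t ht.1 r hr.1) hconv

end Transference

/-- **Transference for semigroups with polynomially growing norm
(Corollary 4.2).**  For every `p ∈ (1,∞)` there is `c_p ≥ 0` such that for
every `C₀`-semigroup with `‖T(s)‖ ≤ M(1+s)^α`, every `0 < a < b`, every
finite complex Borel measure `μ = h·ν` supported in `[a,b]` and every
`L^p(ℝ;X)`-convolution bound `C` for `μ`: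
`‖T_μ x‖ ≤ c_p M² (1+b)^{2α} (1 + log(b/a)) C ‖x‖`. -/
theorem transference_semigroup_polynomial_growth (p : ℝ) (hp : 1 < p) :
    ∃ c : ℝ, 0 ≤ c ∧
      ∀ (X : Type*) [NormedAddCommGroup X] [NormedSpace ℂ X] [CompleteSpace X],
      ∀ T : ℝ → X →L[ℂ] X,
        T 0 = 1 →
        (∀ s ≥ (0:ℝ), ∀ t ≥ (0:ℝ), T (s + t) = (T s).comp (T t)) →
        (∀ x : X, ContinuousOn (fun s => T s x) (Set.Ici 0)) →
      ∀ M α : ℝ, 0 ≤ M → 0 ≤ α →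
        (∀ s : ℝ, 0 ≤ s → ‖T s‖ ≤ M * (1 + s) ^ α) →
      ∀ a b : ℝ, 0 < a → a < b →
      ∀ ν : Measure ℝ, IsFiniteMeasure ν → ν (Set.Icc a b)ᶜ = 0 →
      ∀ h : ℝ → ℂ, Integrable h ν →
      ∀ C : ℝ, 0 ≤ C →
        (∀ F : ℝ → X, MemLp F (ENNReal.ofReal p) volume →
          eLpNorm (fun t => ∫ s, h s • F (t - s) ∂ν) (ENNReal.ofReal p) volume
            ≤ ENNReal.ofReal C * eLpNorm F (ENNReal.ofReal p) volume) →
      ∀ x : X,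
        ‖∫ s, h s • T s x ∂ν‖ ≤
          c * M ^ 2 * (1 + b) ^ (2 * α) * (1 + Real.log (b / a)) * C * ‖x‖ := by
  refine ⟨2, zero_le_two, fun X _ _ _ T _ hsemigroup hcont M α hM hα hgrowth a b ha hab ν _ hν h hh
    C hC hconv x => ?_⟩
  have hb : 0 < b := ha.trans hab
  obtain ⟨n, hn, hn_log⟩ := exists_div_two_pow_le ha hab.le
  have hT : ∀ t ∈ Icc 0 b, ‖T t‖ ≤ M * (1 + b) ^ α := fun t ht =>
    (hgrowth t ht.1).trans (by gcongr; exacts [by linarith [ht.1], ht.2])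
  have hνn : ∀ᵐ s ∂ν, s ∈ Icc (b / 2 ^ n) b := (ae_iff.2 hν).mono fun s hs => ⟨hn.trans hs.1, hs.2⟩
  calc ‖∫ s, h s • T s x ∂ν‖
      ≤ (1 + n / 2) * ((M * (1 + b) ^ α) ^ 2 * C * ‖x‖) :=
        norm_integral_smul_orbit_le (ENNReal.one_le_ofReal.2 hp.le) hsemigroup (hcont x) hb hC hT n
          hνn hh hconv
    _ ≤ 2 * (1 + Real.log (b / a)) * ((M * (1 + b) ^ α) ^ 2 * C * ‖x‖) := by
        gcongr
        linarith
    _ = 2 * M ^ 2 * (1 + b) ^ (2 * α) * (1 + Real.log (b / a)) * C * ‖x‖ := by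
        rw [mul_pow, ← Real.rpow_mul_natCast (by linarith), mul_comm α]
        push_cast
        ring
end

section
/- Let p ∈ (1,∞) and let p' be its conjugate exponent (1/p + 1/p' = 1). Let X be a Banach space, T ∈ L(X), a, b ∈ ℤ with 1 ≤ a ≤ b, M(b) := sup_{0≤n≤b} ‖Tⁿ‖, let μ : ℤ → ℂ be supported in { n : a ≤ n ≤ b }, and let C ≥ 0 be an ℓ^p(ℤ;X)-convolution bound for μ. Then ‖Σ_{n=a}^{b} μ(n) Tⁿ‖ ≤ M(b)² (b/a)^{1/max(p,p')} C. -/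
/-!
Fix `x ∈ X` and feed the convolution bound the sequence `F(m) = T⁻ᵐ x` on an input window
`J ⊆ [-b, 0]`. Applying `Tⁿ` to `(μ ∗ F)(n)` and summing over an output window `I ⊆ [0, b]` gives
`N • (∑ₖ μ(k) Tᵏ) x`, where `N = #{n ∈ I | n - k ∈ J}` must not depend on `k ∈ [a, b]`.
Hölder's inequality on `I` and the convolution bound then give
`N ‖(∑ₖ μ(k) Tᵏ) x‖ ≤ M² |I|^{1/p'} |J|^{1/p} C ‖x‖`. The windows `I = [0, a]`, `J = [-b, 0]`
(for `p ≥ p'`) and `I = [0, b]`, `J = [-a, 0]` (for `p ≤ p'`) both have `N = a + 1` and leave the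
factor `((b + 1)/(a + 1))^{1/max(p,p')} ≤ (b/a)^{1/max(p,p')}`.
-/

open MeasureTheory
open Finset

section CountingMeasure

variable {α E : Type*} [MeasurableSpace α] [MeasurableSingletonClass α] [NormedAddCommGroup E]
  {p : ℝ} {f : α → E} {s : Finset α}

lemma eLpNorm_count_eq_of_support_subset (hp : 0 < p) (hf : ∀ a ∉ s, f a = 0) :
    eLpNorm f (ENNReal.ofReal p) Measure.count =
      ENNReal.ofReal ((∑ a ∈ s, ‖f a‖ ^ p) ^ (1 / p)) := by
  have hsum : ∑' a, ‖f a‖ₑ ^ p = ∑ a ∈ s, ‖f a‖ₑ ^ p :=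
    tsum_eq_sum fun a ha => by simp [hf a ha, ENNReal.zero_rpow_of_pos hp]
  rw [eLpNorm_eq_lintegral_rpow_enorm_toReal (by simpa using hp) ENNReal.ofReal_ne_top,
    lintegral_count, ENNReal.toReal_ofReal hp.le, hsum,
    ← ENNReal.ofReal_rpow_of_nonneg (by positivity) (by positivity),
    ENNReal.ofReal_sum_of_nonneg fun a _ => by positivity]
  simp_rw [← ENNReal.ofReal_rpow_of_nonneg (norm_nonneg _) hp.le, ofReal_norm]

lemma memLp_count_of_support_subset [Countable α] (hp : 0 < p) (hf : ∀ a ∉ s, f a = 0) :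
    MemLp f (ENNReal.ofReal p) Measure.count :=
  ⟨.of_discrete, by rw [eLpNorm_count_eq_of_support_subset hp hf]; exact ENNReal.ofReal_lt_top⟩

end CountingMeasure

lemma Real.sum_le_card_rpow_mul_sum_rpow {ι : Type*} (s : Finset ι) {f : ι → ℝ} {p q : ℝ}
    (hpq : p.HolderConjugate q) (hf : ∀ i ∈ s, 0 ≤ f i) :
    ∑ i ∈ s, f i ≤ (#s : ℝ) ^ (1 / q) * (∑ i ∈ s, f i ^ p) ^ (1 / p) := by
  simpa [mul_comm] using
    Real.inner_le_Lp_mul_Lq_of_nonneg s hpq hf (g := fun _ => 1) fun _ _ => zero_le_one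

lemma Real.sum_rpow_rpow_le_card_rpow_mul {ι : Type*} (s : Finset ι) {f : ι → ℝ} {p B : ℝ}
    (hp : 0 < p) (hf : ∀ i ∈ s, 0 ≤ f i) (hB : ∀ i ∈ s, f i ≤ B) :
    (∑ i ∈ s, f i ^ p) ^ (1 / p) ≤ (#s : ℝ) ^ (1 / p) * B := by
  rcases s.eq_empty_or_nonempty with rfl | ⟨i, hi⟩
  · simp [hp.ne']
  have hB0 : 0 ≤ B := (hf i hi).trans (hB i hi)
  calc (∑ i ∈ s, f i ^ p) ^ (1 / p) ≤ (#s * B ^ p) ^ (1 / p) := by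
        gcongr
        · exact sum_nonneg fun i hi => Real.rpow_nonneg (hf i hi) p
        · simpa using
            sum_le_card_nsmul s _ _ fun i hi => Real.rpow_le_rpow (hf i hi) (hB i hi) hp.le
    _ = (#s : ℝ) ^ (1 / p) * B := by
        rw [Real.mul_rpow (by positivity) (by positivity), ← Real.rpow_mul hB0,
          mul_one_div_cancel hp.ne', Real.rpow_one]

lemma Real.HolderConjugate.rpow_mul_rpow_div_eq {p q : ℝ} (hpq : p.HolderConjugate q) {x y : ℝ}
    (hx : 0 < x) (hy : 0 ≤ y) : x ^ (1 / q) * y ^ (1 / p) / x = (y / x) ^ (1 / p) := by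
  have hsplit : x = x ^ (1 / p) * x ^ (1 / q) := by
    rw [← Real.rpow_add hx, hpq.one_div_add_one_div, div_one, Real.rpow_one]
  rw [Real.div_rpow hy hx.le]
  nth_rw 2 [hsplit]
  have := Real.rpow_pos_of_pos hx (1 / q)
  field_simp

lemma Real.HolderConjugate.rpow_add_one_mul_rpow_add_one_div_le {p q : ℝ}
    (hpq : p.HolderConjugate q) {x y : ℝ} (hx : 0 < x) (hxy : x ≤ y) :
    (x + 1) ^ (1 / q) * (y + 1) ^ (1 / p) / (x + 1) ≤ (y / x) ^ (1 / p) := by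
  rw [hpq.rpow_mul_rpow_div_eq (by linarith) (by linarith)]
  refine Real.rpow_le_rpow (div_nonneg (by linarith) (by linarith)) ?_ hpq.one_div_nonneg
  rw [div_le_div_iff₀ (by linarith) hx]
  linarith

lemma card_window_pairs_of_long_input {a b k : ℤ} (hk : k ∈ Icc a b) :
    #{n ∈ Icc 0 a | n - k ∈ Icc (-b) 0} = #(Icc 0 a) := by
  congr 1
  refine filter_true_of_mem fun n hn => ?_
  simp only [mem_Icc] at hk hn ⊢
  omega

lemma card_window_pairs_of_long_output {a b k : ℤ} (hk : k ∈ Icc a b) :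
    #{n ∈ Icc 0 b | n - k ∈ Icc (-a) 0} = #(Icc 0 a) := by
  have : {n ∈ Icc 0 b | n - k ∈ Icc (-a) 0} = Icc (k - a) k := by
    ext n
    simp only [mem_filter, mem_Icc] at hk ⊢
    omega
  rw [this, Int.card_Icc, Int.card_Icc]
  congr 1
  ring

section Transference

variable {X : Type*} [NormedAddCommGroup X] [NormedSpace ℂ X]

noncomputable def discreteConvolution (μ : ℤ → ℂ) (F : ℤ → X) (n : ℤ) : X :=
  ∑' k : ℤ, μ k • F (n - k)

variable (X) in
def IsLpConvolutionBound (p : ℝ) (μ : ℤ → ℂ) (C : ℝ) : Prop :=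
  ∀ F : ℤ → X, MemLp F (ENNReal.ofReal p) Measure.count →
    eLpNorm (discreteConvolution μ F) (ENNReal.ofReal p) Measure.count ≤
      ENNReal.ofReal C * eLpNorm F (ENNReal.ofReal p) Measure.count

lemma discreteConvolution_eq_sum {μ : ℤ → ℂ} {K : Finset ℤ} (hμ : ∀ k, μ k ≠ 0 → k ∈ K)
    (F : ℤ → X) (n : ℤ) : discreteConvolution μ F n = ∑ k ∈ K, μ k • F (n - k) :=
  tsum_eq_sum fun k hk => by rw [not_imp_comm.mp (hμ k) hk, zero_smul]

lemma IsLpConvolutionBound.sum_rpow_le {p : ℝ} {μ : ℤ → ℂ} {C : ℝ}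
    (hμ : IsLpConvolutionBound X p μ C) (hp : 0 < p) (hC : 0 ≤ C) {F : ℤ → X} {s : Finset ℤ}
    (hF : ∀ m ∉ s, F m = 0) (t : Finset ℤ) :
    (∑ n ∈ t, ‖discreteConvolution μ F n‖ ^ p) ^ (1 / p) ≤
      C * (∑ m ∈ s, ‖F m‖ ^ p) ^ (1 / p) := by
  set G := discreteConvolution μ F
  have hGt : (∑ n ∈ t, ‖G n‖ ^ p) = ∑ n ∈ t, ‖(t : Set ℤ).indicator G n‖ ^ p :=
    sum_congr rfl fun n hn => by rw [Set.indicator_of_mem (mem_coe.mpr hn)]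
  rw [← ENNReal.ofReal_le_ofReal_iff (by positivity), hGt, ENNReal.ofReal_mul hC,
    ← eLpNorm_count_eq_of_support_subset hp hF,
    ← eLpNorm_count_eq_of_support_subset hp fun n hn => Set.indicator_of_notMem hn G]
  exact (eLpNorm_indicator_le G).trans (hμ F (memLp_count_of_support_subset hp hF))

/-- `T⁻ᵐ x` on `J`; since `(-m).toNat` truncates, this is only meaningful for `J ⊆ (-∞, 0]`. -/
def reflectedOrbitOn (T : X →L[ℂ] X) (J : Finset ℤ) (x : X) (m : ℤ) : X :=
  if m ∈ J then (T ^ (-m).toNat) x else 0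

lemma sum_pow_apply_discreteConvolution_reflectedOrbitOn (T : X →L[ℂ] X) {μ : ℤ → ℂ}
    {K I J : Finset ℤ} (hμ : ∀ k, μ k ≠ 0 → k ∈ K) (hI : ∀ n ∈ I, 0 ≤ n) (hJ : ∀ m ∈ J, m ≤ 0)
    {N : ℕ} (hcount : ∀ k ∈ K, #{n ∈ I | n - k ∈ J} = N) (x : X) :
    ∑ n ∈ I, (T ^ n.toNat) (discreteConvolution μ (reflectedOrbitOn T J x) n) =
      N • (∑ k ∈ K, μ k • T ^ k.toNat) x := by
  calc ∑ n ∈ I, (T ^ n.toNat) (discreteConvolution μ (reflectedOrbitOn T J x) n)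
      = ∑ n ∈ I, ∑ k ∈ K, if n - k ∈ J then μ k • (T ^ k.toNat) x else 0 := by
        refine sum_congr rfl fun n hn => ?_
        rw [discreteConvolution_eq_sum hμ, map_sum]
        refine sum_congr rfl fun k _ => ?_
        unfold reflectedOrbitOn
        split_ifs with hnk
        · have : n.toNat + (-(n - k)).toNat = k.toNat := by
            have := hI n hn; have := hJ _ hnk; omega
          rw [map_smul, ← mul_apply_eq_comp, ← pow_add, this]
        · simp
    _ = ∑ k ∈ K, ∑ n ∈ I, if n - k ∈ J then μ k • (T ^ k.toNat) x else 0 := sum_comm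
    _ = N • (∑ k ∈ K, μ k • T ^ k.toNat) x := by
        simp only [← sum_filter, sum_const, _root_.sum_apply, smul_apply, smul_sum]
        exact sum_congr rfl fun k hk => by rw [hcount k hk]

variable {p p' : ℝ} (hpq : p.HolderConjugate p') (T : X →L[ℂ] X) {b : ℤ} (hb : 0 ≤ b) {M : ℝ}
  (hM : ∀ n : ℕ, (n : ℤ) ≤ b → ‖T ^ n‖ ≤ M) {μ : ℤ → ℂ} {C : ℝ} (hC : 0 ≤ C)
  (hμC : IsLpConvolutionBound X p μ C) {K I J : Finset ℤ} (hμ : ∀ k, μ k ≠ 0 → k ∈ K)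
  (hI : I ⊆ Icc 0 b) (hJ : J ⊆ Icc (-b) 0) {N : ℕ}
  (hcount : ∀ k ∈ K, #{n ∈ I | n - k ∈ J} = N)
include hpq hb hM hC hμC hμ hI hJ hcount

lemma card_mul_norm_sum_smul_pow_apply_le (x : X) :
    N * ‖(∑ k ∈ K, μ k • T ^ k.toNat) x‖ ≤
      M ^ 2 * ((#I : ℝ) ^ (1 / p') * (#J : ℝ) ^ (1 / p)) * C * ‖x‖ := by
  have hM0 : 0 ≤ M := (norm_nonneg _).trans (hM 0 (by omega))
  set F := reflectedOrbitOn T J x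
  set G := discreteConvolution μ F
  have hF : ∀ m ∉ J, F m = 0 := fun m hm => if_neg hm
  have hFJ : ∀ m ∈ J, ‖F m‖ ≤ M * ‖x‖ := fun m hm => by
    have := mem_Icc.mp (hJ hm)
    rw [show F m = (T ^ (-m).toNat) x from if_pos hm]
    exact (T ^ (-m).toNat).le_of_opNorm_le (hM _ (by omega)) x
  calc (N : ℝ) * ‖(∑ k ∈ K, μ k • T ^ k.toNat) x‖ = ‖∑ n ∈ I, (T ^ n.toNat) (G n)‖ := by
        rw [sum_pow_apply_discreteConvolution_reflectedOrbitOn T hμ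
          (fun n hn => (mem_Icc.mp (hI hn)).1) (fun m hm => (mem_Icc.mp (hJ hm)).2) hcount,
          RCLike.norm_nsmul ℂ, nsmul_eq_mul]
    _ ≤ ∑ n ∈ I, M * ‖G n‖ := by
        refine (norm_sum_le _ _).trans (sum_le_sum fun n hn => ?_)
        have := mem_Icc.mp (hI hn)
        exact (T ^ n.toNat).le_of_opNorm_le (hM _ (by omega)) _
    _ = M * ∑ n ∈ I, ‖G n‖ := (mul_sum _ _ _).symm
    _ ≤ M * ((#I : ℝ) ^ (1 / p') * (∑ n ∈ I, ‖G n‖ ^ p) ^ (1 / p)) := by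
        gcongr
        exact Real.sum_le_card_rpow_mul_sum_rpow I hpq fun n _ => norm_nonneg _
    _ ≤ M * ((#I : ℝ) ^ (1 / p') * (C * (∑ m ∈ J, ‖F m‖ ^ p) ^ (1 / p))) := by
        gcongr
        exact hμC.sum_rpow_le hpq.pos hC hF I
    _ ≤ M * ((#I : ℝ) ^ (1 / p') * (C * ((#J : ℝ) ^ (1 / p) * (M * ‖x‖)))) := by
        gcongr
        exact Real.sum_rpow_rpow_le_card_rpow_mul J hpq.pos (fun m _ => norm_nonneg _) hFJ
    _ = M ^ 2 * ((#I : ℝ) ^ (1 / p') * (#J : ℝ) ^ (1 / p)) * C * ‖x‖ := by ring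

lemma norm_sum_smul_pow_le_of_windows (hN : 0 < N) :
    ‖∑ k ∈ K, μ k • T ^ k.toNat‖ ≤
      M ^ 2 * ((#I : ℝ) ^ (1 / p') * (#J : ℝ) ^ (1 / p) / N) * C := by
  have hM0 : 0 ≤ M := (norm_nonneg _).trans (hM 0 (by omega))
  refine ContinuousLinearMap.opNorm_le_bound _ (by positivity) fun x => ?_
  have := card_mul_norm_sum_smul_pow_apply_le hpq T hb hM hC hμC hμ hI hJ hcount x
  rw [mul_div_assoc', div_mul_eq_mul_div, div_mul_eq_mul_div, le_div_iff₀ (by positivity)]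
  linarith

end Transference

theorem transference_discrete_explicit_general
    {X : Type*} [NormedAddCommGroup X] [NormedSpace ℂ X]
    (p p' : ℝ) (hp : 1 < p) (hpp' : 1 / p + 1 / p' = 1)
    (T : X →L[ℂ] X)
    (a b : ℤ) (ha : 1 ≤ a) (hab : a ≤ b)
    (M : ℝ) (hM : ∀ n : ℕ, (n : ℤ) ≤ b → ‖T ^ n‖ ≤ M)
    (μ : ℤ → ℂ) (hsupp : ∀ n : ℤ, μ n ≠ 0 → a ≤ n ∧ n ≤ b)
    (C : ℝ) (hC : 0 ≤ C)
    (hCbound : ∀ F : ℤ → X, MemLp F (ENNReal.ofReal p) Measure.count →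
      eLpNorm (fun n : ℤ => ∑' k : ℤ, μ k • F (n - k)) (ENNReal.ofReal p)
          Measure.count
        ≤ ENNReal.ofReal C * eLpNorm F (ENNReal.ofReal p) Measure.count) :
    ‖∑ n ∈ Finset.Icc a b, μ n • T ^ n.toNat‖ ≤
      M ^ 2 * ((b : ℝ) / (a : ℝ)) ^ (1 / max p p') * C := by
  have hpq : p.HolderConjugate p' :=
    Real.holderConjugate_iff.mpr ⟨hp, by simpa only [one_div] using hpp'⟩
  have hμ : ∀ k, μ k ≠ 0 → k ∈ Icc a b := fun k hk => mem_Icc.mpr (hsupp k hk)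
  have hN : 0 < #(Icc 0 a) := by simp only [Int.card_Icc]; omega
  have hcard : ∀ {u v : ℤ}, u ≤ 0 → 0 ≤ v → (#(Icc u v) : ℝ) = v - u + 1 := fun hu hv => by
    rw [← Int.cast_natCast, Int.card_Icc_of_le _ _ (by omega)]
    push_cast
    ring
  have hA : (0 : ℝ) < a := by exact_mod_cast (by omega : (0 : ℤ) < a)
  have hAB : (a : ℝ) ≤ b := by exact_mod_cast hab
  rcases le_total p' p with h | h
  · calc _ ≤ M ^ 2 * ((#(Icc 0 a) : ℝ) ^ (1 / p') * (#(Icc (-b) 0) : ℝ) ^ (1 / p) / #(Icc 0 a))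
              * C :=
          norm_sum_smul_pow_le_of_windows hpq T (by omega) hM hC hCbound hμ
            (Icc_subset_Icc le_rfl hab) subset_rfl (fun _ => card_window_pairs_of_long_input) hN
      _ ≤ _ := by
          rw [hcard le_rfl (by omega), hcard (by omega) le_rfl, max_eq_left h]
          gcongr M ^ 2 * ?_ * C
          simpa using hpq.rpow_add_one_mul_rpow_add_one_div_le hA hAB
  · calc _ ≤ M ^ 2 * ((#(Icc 0 b) : ℝ) ^ (1 / p') * (#(Icc (-a) 0) : ℝ) ^ (1 / p) / #(Icc 0 a))
              * C :=
          norm_sum_smul_pow_le_of_windows hpq T (by omega) hM hC hCbound hμ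
            subset_rfl (Icc_subset_Icc (by omega) le_rfl)
            (fun _ => card_window_pairs_of_long_output) hN
      _ ≤ _ := by
          rw [hcard le_rfl (by omega), hcard (by omega) le_rfl, hcard le_rfl (by omega),
            mul_comm ((_ : ℝ) ^ (1 / p')), max_eq_right h]
          gcongr M ^ 2 * ?_ * C
          simpa using hpq.symm.rpow_add_one_mul_rpow_add_one_div_le hA hAB

/-- **Discrete transference with explicit power-type constant
(Remark 4.6).**  If `T ∈ L(X)`, `1 ≤ a ≤ b` are integers, `M(b)` bounds
`‖Tⁿ‖` for `0 ≤ n ≤ b`, `μ : ℤ → ℂ` is supported in `[a,b]`, and `C` is an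
`ℓ^p(ℤ;X)`-convolution bound for `μ`, then
`‖Σ_{n=a}^{b} μ(n) Tⁿ‖ ≤ M(b)² (b/a)^{1/max(p,p')} C`. -/
theorem transference_discrete_explicit
    {X : Type*} [NormedAddCommGroup X] [NormedSpace ℂ X] [CompleteSpace X]
    (p p' : ℝ) (hp : 1 < p) (hpp' : 1 / p + 1 / p' = 1)
    (T : X →L[ℂ] X)
    (a b : ℤ) (ha : 1 ≤ a) (hab : a ≤ b)
    (M : ℝ) (hM : ∀ n : ℕ, (n : ℤ) ≤ b → ‖T ^ n‖ ≤ M)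
    (μ : ℤ → ℂ) (hsupp : ∀ n : ℤ, μ n ≠ 0 → a ≤ n ∧ n ≤ b)
    (C : ℝ) (hC : 0 ≤ C)
    (hCbound : ∀ F : ℤ → X, MemLp F (ENNReal.ofReal p) Measure.count →
      eLpNorm (fun n : ℤ => ∑' k : ℤ, μ k • F (n - k)) (ENNReal.ofReal p)
          Measure.count
        ≤ ENNReal.ofReal C * eLpNorm F (ENNReal.ofReal p) Measure.count) :
    ‖∑ n ∈ Finset.Icc a b, μ n • T ^ n.toNat‖ ≤
      M ^ 2 * ((b : ℝ) / (a : ℝ)) ^ (1 / max p p') * C :=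
  transference_discrete_explicit_general p p' hp hpp' T a b ha hab M hM μ hsupp C hC hCbound
end
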